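/- arXiv:1803.06609 — 4 statements merged into one kernel-verified Lean document; each statement's English description precedes it below -/
import Mathlib

section
/- Let n ≥ 2, let ε ∈ {−1,1}ⁿ and let 1 ≤ i ≤ n, and set H_{ε,i} = H_ε ∩ Lᵢ. If a hyperplane of the arrangement 𝓗ₙ contains H_{ε,i}, then it equals Lᵢ, H_ε, or H_{g⁽ⁱ⁾(ε)}. -/
open scoped BigOperators

/-- The affine hyperplane `H_ε = {x ∈ ℝⁿ : ∑ εᵢ xᵢ = 1}`. -/
def Hplane (n : ℕ) (ε : Fin n → ℝ) : Set (Fin n → ℝ) := {x | ∑ i, ε i * x i = 1}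

/-- The coordinate hyperplane `Lᵢ = {x ∈ ℝⁿ : xᵢ = 0}`. -/
def Lplane (n : ℕ) (i : Fin n) : Set (Fin n → ℝ) := {x | x i = 0}

/-- The `F_C`-arrangement `𝓗ₙ`. -/
def FCarrangement (n : ℕ) : Set (Set (Fin n → ℝ)) :=
  {S | (∃ ε : Fin n → ℝ, (∀ i, ε i = 1 ∨ ε i = -1) ∧ S = Hplane n ε) ∨
    ∃ i : Fin n, S = Lplane n i}

/-! The points `εⱼ eⱼ` with `j ≠ i` lie in `H_ε ∩ Lᵢ`. Testing a hyperplane of `𝓗ₙ` against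
them pins down every sign except the `i`-th one, and rules out every `Lⱼ` with `j ≠ i`. -/

section

variable {n : ℕ}

theorem single_mem_Hplane_iff (δ : Fin n → ℝ) (j : Fin n) (c : ℝ) :
    Pi.single j c ∈ Hplane n δ ↔ δ j * c = 1 := by
  simp [Hplane, Pi.single_apply]

theorem single_mem_Lplane_iff (i j : Fin n) (c : ℝ) :
    Pi.single j c ∈ Lplane n i ↔ i ≠ j ∨ c = 0 := by
  by_cases h : i = j <;> simp [Lplane, h]

theorem sign_eq_or_eq_neg {a b : ℝ} (ha : a = 1 ∨ a = -1) (hb : b = 1 ∨ b = -1) :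
    a = b ∨ a = -b := by
  rcases ha with rfl | rfl <;> rcases hb with rfl | rfl <;> norm_num

theorem single_mem_Hplane_inter_Lplane {ε : Fin n → ℝ} {i j : Fin n}
    (hε : ε j = 1 ∨ ε j = -1) (hji : j ≠ i) :
    Pi.single j (ε j) ∈ Hplane n ε ∩ Lplane n i :=
  ⟨(single_mem_Hplane_iff ε j _).2 (mul_self_eq_one_iff.2 hε),
    (single_mem_Lplane_iff i j _).2 (Or.inl hji.symm)⟩

theorem eq_of_Hplane_inter_Lplane_subset_Hplane {ε δ : Fin n → ℝ} {i : Fin n}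
    (hε : ∀ j, ε j = 1 ∨ ε j = -1) (hδ : ∀ j, δ j = 1 ∨ δ j = -1)
    (hsub : Hplane n ε ∩ Lplane n i ⊆ Hplane n δ) (j : Fin n) (hji : j ≠ i) :
    δ j = ε j :=
  left_inv_eq_right_inv (mul_self_eq_one_iff.2 (hδ j))
    ((single_mem_Hplane_iff δ j _).1 (hsub (single_mem_Hplane_inter_Lplane (hε j) hji)))

theorem eq_of_Hplane_inter_Lplane_subset_Lplane {ε : Fin n → ℝ} {i j : Fin n}
    (hε : ε j = 1 ∨ ε j = -1) (hsub : Hplane n ε ∩ Lplane n i ⊆ Lplane n j) : j = i := by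
  by_contra hji
  have hmem := (single_mem_Lplane_iff j j _).1 (hsub (single_mem_Hplane_inter_Lplane hε hji))
  rcases hε with h | h <;> simp_all

end

theorem Function.eq_or_eq_update_neg_of_forall_ne {ι α : Type*} [DecidableEq ι] [Neg α]
    {δ ε : ι → α} {i : ι} (hi : δ i = ε i ∨ δ i = -ε i) (h : ∀ j, j ≠ i → δ j = ε j) :
    δ = ε ∨ δ = Function.update ε i (-ε i) := by
  rcases hi with hi | hi
  · left
    funext j
    rcases eq_or_ne j i with rfl | hj
    exacts [hi, h j hj]
  · right
    funext j
    rcases eq_or_ne j i with rfl | hj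
    · simpa using hi
    · simpa [hj] using h j hj

theorem hyperplane_containing_mixed_intersection_general (n : ℕ)
    (ε : Fin n → ℝ) (hε : ∀ i, ε i = 1 ∨ ε i = -1) (i : Fin n)
    (S : Set (Fin n → ℝ)) (hS : S ∈ FCarrangement n)
    (hsub : Hplane n ε ∩ Lplane n i ⊆ S) :
    S = Lplane n i ∨ S = Hplane n ε ∨ S = Hplane n (Function.update ε i (-ε i)) := by
  rcases hS with ⟨δ, hδ, rfl⟩ | ⟨j, rfl⟩
  · right
    rcases Function.eq_or_eq_update_neg_of_forall_ne (sign_eq_or_eq_neg (hδ i) (hε i))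
        (eq_of_Hplane_inter_Lplane_subset_Hplane hε hδ hsub) with rfl | rfl
    · exact Or.inl rfl
    · exact Or.inr rfl
  · left
    rw [eq_of_Hplane_inter_Lplane_subset_Lplane (hε j) hsub]

/-- For `ε ∈ {-1,1}ⁿ` and `1 ≤ i ≤ n`, any hyperplane of the arrangement
`𝓗ₙ` containing `H_{ε,i} = H_ε ∩ Lᵢ` equals `Lᵢ`, `H_ε`, or `H_{g⁽ⁱ⁾(ε)}` where `g⁽ⁱ⁾`
flips the sign at position `i`. -/
theorem hyperplane_containing_mixed_intersection (n : ℕ) (hn : 2 ≤ n)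
    (ε : Fin n → ℝ) (hε : ∀ i, ε i = 1 ∨ ε i = -1) (i : Fin n)
    (S : Set (Fin n → ℝ)) (hS : S ∈ FCarrangement n)
    (hsub : Hplane n ε ∩ Lplane n i ⊆ S) :
    S = Lplane n i ∨ S = Hplane n ε ∨ S = Hplane n (Function.update ε i (-ε i)) :=
  hyperplane_containing_mixed_intersection_general n ε hε i S hS hsub
end

section
/- Let n ≥ 3 and let i, j be distinct integers with 1 ≤ i, j ≤ n, and set H_{i,j} = Lᵢ ∩ Lⱼ. If a hyperplane of the arrangement 𝓗ₙ contains H_{i,j}, then it equals Lᵢ or Lⱼ. -/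
open scoped BigOperators

/-- For distinct `i, j`, any hyperplane of the arrangement `𝓗ₙ` containing
`H_{i,j} = Lᵢ ∩ Lⱼ` equals `Lᵢ` or `Lⱼ`. -/
theorem hyperplane_containing_coordinate_intersection (n : ℕ) (hn : 3 ≤ n)
    (i j : Fin n) (hij : i ≠ j)
    (S : Set (Fin n → ℝ)) (hS : S ∈ FCarrangement n)
    (hsub : Lplane n i ∩ Lplane n j ⊆ S) :
    S = Lplane n i ∨ S = Lplane n j := by
  rcases hS with ⟨ε, hε, rfl⟩ | ⟨k, rfl⟩
  · exfalso
    have h0 : (0 : Fin n → ℝ) ∈ Lplane n i ∩ Lplane n j := ⟨rfl, rfl⟩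
    have := hsub h0
    simp [Hplane] at this
  · by_cases hki : k = i
    · exact Or.inl (by rw [hki])
    by_cases hkj : k = j
    · exact Or.inr (by rw [hkj])
    exfalso
    have hx : (fun m => if m = k then (1:ℝ) else 0) ∈ Lplane n i ∩ Lplane n j := by
      constructor <;> simp [Lplane, Ne.symm hki, Ne.symm hkj]
    have := hsub hx
    simp [Lplane] at this
end

section
/- and Let n ≥ 1, let G be a group and let Γ₀, Γ₁, …, Γₙ ∈ G satisfy [Γᵢ,Γⱼ] = 1 for all 1 ≤ i,j ≤ n. Then the following are equivalent: (i) [M_ε⁻¹Γ₀M_ε, M_{ε'}⁻¹Γ₀M_{ε'}] = 1 for all ε, ε' ∈ {−1,1}ⁿ with H_ε ∩ H_{ε'} ∩ ℝⁿ_{>0} ≠ ∅; (ii) [M(I)⁻¹Γ₀M(I), M(J)⁻¹Γ₀M(J)] = 1 for all subsets I, J ⊆ {1,…,n} with I ∩ J = ∅, I ≠ ∅, J ≠ ∅ and #I + #J ≤ n − 1. -/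
open scoped BigOperators
open scoped commutatorElement

/-- For commuting group elements `Γ₁, …, Γₙ` (packaged with `Γ₀` as
`Γ : Fin (n+1) → G`) and `I ⊆ {1,…,n}`, the product `M(I) = ∏_{i ∈ I} Γᵢ`
taken in increasing order of indices. -/
def Mprod {n : ℕ} {G : Type*} [Group G] (Γ : Fin (n + 1) → G) (I : Finset (Fin n)) : G :=
  ((I.sort (· ≤ ·)).map fun i => Γ i.succ).prod

/-- `S(ε) = {i : εᵢ = -1}` for a sign vector `ε ∈ {-1,1}ⁿ`. -/
noncomputable def Sneg {n : ℕ} (ε : Fin n → ℝ) : Finset (Fin n) :=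
  Finset.univ.filter fun i => ε i = -1


/-!
Since `ε i = 1 - 2·[i ∈ S(ε)]`, the hyperplane `H_ε` is `∑ x - 2 ∑_{S(ε)} x = 1`. A positive
point on `H_ε ∩ H_{ε'}` therefore gives `S = S(ε)` and `S' = S(ε')` equal weight, which
(weights being positive) forces `S = S'` or both `S \ S'` and `S' \ S` nonempty, and it
gives `S ∪ S'` weight less than the total, so `S ∪ S'` misses an index. Conversely, for
disjoint nonempty `I`, `J` missing an index, the weights `1 / #B` on each block `B` of
`I`, `J`, `(I ∪ J)ᶜ` give such a point with `S(ε) = I`, `S(ε') = J`. On the group side,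
`M(S) = M(S \ S') M(S ∩ S')`, so the relation for `S`, `S'` is the conjugate by
`M(S ∩ S')` of the relation for `S \ S'`, `S' \ S`.
-/

open Finset

section Weights

variable {ι : Type*} {x : ι → ℝ} {S S' : Finset ι}

lemma sum_inv_card_eq_one {s : Finset ι} (hs : s.Nonempty) : ∑ _i ∈ s, (#s : ℝ)⁻¹ = 1 := by
  rw [sum_const, nsmul_eq_mul, mul_inv_cancel₀ (Nat.cast_ne_zero.2 hs.card_ne_zero)]

lemma eq_of_subset_of_sum_eq (hx : ∀ i, 0 < x i) (hSS' : S ⊆ S')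
    (h : ∑ i ∈ S, x i = ∑ i ∈ S', x i) : S = S' := by
  by_contra hne
  obtain ⟨i, hiS', hiS⟩ := exists_of_ssubset (hSS'.ssubset_of_ne hne)
  exact (sum_lt_sum_of_subset hSS' hiS' hiS (hx i) fun j _ _ => (hx j).le).ne h

variable [Fintype ι] [DecidableEq ι]

lemma exists_pos_sum_sub_two_mul_sum_eq_one {I J : Finset ι} (hIJ : Disjoint I J)
    (hI : I.Nonempty) (hJ : J.Nonempty) (hIJ_univ : I ∪ J ≠ univ) :
    ∃ x : ι → ℝ, (∀ i, 0 < x i) ∧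
      ∑ i, x i - 2 * ∑ i ∈ I, x i = 1 ∧ ∑ i, x i - 2 * ∑ i ∈ J, x i = 1 := by
  set R := (I ∪ J)ᶜ
  have hR : R.Nonempty := compl_ne_univ_iff_nonempty _ |>.mp (by simpa [R] using hIJ_univ)
  let x : ι → ℝ := fun i =>
    if i ∈ I then (#I : ℝ)⁻¹ else if i ∈ J then (#J : ℝ)⁻¹ else (#R : ℝ)⁻¹
  have hxI : ∑ i ∈ I, x i = 1 := by
    rw [← sum_inv_card_eq_one hI]
    exact sum_congr rfl fun i hi => if_pos hi
  have hxJ : ∑ i ∈ J, x i = 1 := by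
    rw [← sum_inv_card_eq_one hJ]
    exact sum_congr rfl fun i hi => by simp [x, hi, disjoint_right.1 hIJ hi]
  have hxR : ∑ i ∈ R, x i = 1 := by
    rw [← sum_inv_card_eq_one hR]
    refine sum_congr rfl fun i hi => ?_
    simp only [R, mem_compl, mem_union, not_or] at hi
    simp [x, hi.1, hi.2]
  have hx_univ : ∑ i, x i = 3 := by
    rw [← sum_add_sum_compl (I ∪ J), sum_union hIJ, hxI, hxJ, hxR]
    norm_num
  refine ⟨x, fun i => ?_, by linarith, by linarith⟩
  simp only [x]
  split_ifs
  exacts [inv_pos.2 (Nat.cast_pos.2 hI.card_pos), inv_pos.2 (Nat.cast_pos.2 hJ.card_pos),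
    inv_pos.2 (Nat.cast_pos.2 hR.card_pos)]

lemma union_ne_univ_of_sum_sub_two_mul_sum_eq (hx : ∀ i, 0 ≤ x i)
    (h : ∑ i, x i - 2 * ∑ i ∈ S, x i = 1) (h' : ∑ i, x i - 2 * ∑ i ∈ S', x i = 1) :
    S ∪ S' ≠ univ := by
  intro hunion
  have hinter := sum_nonneg fun i (_ : i ∈ S ∩ S') => hx i
  have hsplit := sum_union_inter (s₁ := S) (s₂ := S') (f := x)
  rw [hunion] at hsplit
  linarith

lemma card_sdiff_add_card_sdiff_lt (h : S ∪ S' ≠ univ) : #(S \ S') + #(S' \ S) < Fintype.card ι :=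
  calc #(S \ S') + #(S' \ S) ≤ #(S \ S') + #S' := by gcongr; exact sdiff_subset
    _ = #(S ∪ S') := card_sdiff_add_card S S'
    _ < Fintype.card ι := (card_lt_iff_ne_univ _).2 h

end Weights

section Signs

variable {n : ℕ}

lemma sum_mul_eq_sum_sub_two_mul_sum_Sneg {ε : Fin n → ℝ} (hε : ∀ i, ε i = 1 ∨ ε i = -1)
    (x : Fin n → ℝ) : ∑ i, ε i * x i = ∑ i, x i - 2 * ∑ i ∈ Sneg ε, x i := by
  rw [Sneg, sum_filter, mul_sum, ← sum_sub_distrib]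
  refine sum_congr rfl fun i _ => ?_
  rcases hε i with h | h <;> norm_num [h]
  ring

def signVector (I : Finset (Fin n)) : Fin n → ℝ := fun i => if i ∈ I then -1 else 1

lemma signVector_eq_one_or_eq_neg_one (I : Finset (Fin n)) (i : Fin n) :
    signVector I i = 1 ∨ signVector I i = -1 := by
  unfold signVector; split_ifs <;> norm_num

@[simp]
lemma Sneg_signVector (I : Finset (Fin n)) : Sneg (signVector I) = I := by
  ext i; by_cases hi : i ∈ I <;> norm_num [Sneg, signVector, hi]

end Signs

section Commuting

variable {G : Type*} [Group G]

lemma commutatorElement_conj_mul_conj_mul (g a b t : G) :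
    ⁅(a * t)⁻¹ * g * (a * t), (b * t)⁻¹ * g * (b * t)⁆ = t⁻¹ * ⁅a⁻¹ * g * a, b⁻¹ * g * b⁆ * t := by
  simp only [commutatorElement_def]; group

variable {n : ℕ} {Γ : Fin (n + 1) → G}

lemma Mprod_eq_noncommProd (hcomm : ∀ i j : Fin n, Γ i.succ * Γ j.succ = Γ j.succ * Γ i.succ)
    (I : Finset (Fin n)) :
    Mprod Γ I = I.noncommProd (fun i => Γ i.succ) fun a _ b _ _ => hcomm a b := by
  rw [Mprod, ← noncommProd_toFinset _ _ (fun a _ b _ _ => hcomm a b) (sort_nodup I _)]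
  exact noncommProd_congr (sort_toFinset I _) (fun _ _ => rfl) _

lemma Mprod_union (hcomm : ∀ i j : Fin n, Γ i.succ * Γ j.succ = Γ j.succ * Γ i.succ)
    {I J : Finset (Fin n)} (h : Disjoint I J) :
    Mprod Γ (I ∪ J) = Mprod Γ I * Mprod Γ J := by
  simp only [Mprod_eq_noncommProd hcomm]
  exact noncommProd_union_of_disjoint h _ _

lemma commutatorElement_conj_Mprod_eq_one_of_sdiff
    (hcomm : ∀ i j : Fin n, Γ i.succ * Γ j.succ = Γ j.succ * Γ i.succ) (g : G)
    {S S' : Finset (Fin n)}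
    (h : ⁅(Mprod Γ (S \ S'))⁻¹ * g * Mprod Γ (S \ S'),
      (Mprod Γ (S' \ S))⁻¹ * g * Mprod Γ (S' \ S)⁆ = 1) :
    ⁅(Mprod Γ S)⁻¹ * g * Mprod Γ S, (Mprod Γ S')⁻¹ * g * Mprod Γ S'⁆ = 1 := by
  have hS := Mprod_union hcomm (disjoint_sdiff_inter S S')
  have hS' := Mprod_union hcomm (disjoint_sdiff_inter S' S)
  rw [sdiff_union_inter] at hS hS'
  rw [hS, hS', inter_comm S' S, commutatorElement_conj_mul_conj_mul, h]
  group

end Commuting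

theorem commutation_relations_equivalent_general (n : ℕ)
    (G : Type*) [Group G] (Γ : Fin (n + 1) → G)
    (hcomm : ∀ i j : Fin n, Γ i.succ * Γ j.succ = Γ j.succ * Γ i.succ) :
    (∀ ε ε' : Fin n → ℝ, (∀ i, ε i = 1 ∨ ε i = -1) → (∀ i, ε' i = 1 ∨ ε' i = -1) →
        (∃ x : Fin n → ℝ, (∀ l, 0 < x l) ∧ ∑ i, ε i * x i = 1 ∧ ∑ i, ε' i * x i = 1) →
        ⁅(Mprod Γ (Sneg ε))⁻¹ * Γ 0 * Mprod Γ (Sneg ε),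
          (Mprod Γ (Sneg ε'))⁻¹ * Γ 0 * Mprod Γ (Sneg ε')⁆ = 1) ↔
      ∀ I J : Finset (Fin n), I ∩ J = ∅ → I ≠ ∅ → J ≠ ∅ → I.card + J.card ≤ n - 1 →
        ⁅(Mprod Γ I)⁻¹ * Γ 0 * Mprod Γ I, (Mprod Γ J)⁻¹ * Γ 0 * Mprod Γ J⁆ = 1 := by
  constructor
  · intro h I J hIJ hI hJ hcard
    rw [← nonempty_iff_ne_empty] at hI hJ
    have hunion : I ∪ J ≠ univ := by
      rw [← card_lt_iff_ne_univ, Fintype.card_fin]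
      have := card_union_le I J
      have := hI.card_pos
      omega
    obtain ⟨x, hx, hxI, hxJ⟩ :=
      exists_pos_sum_sub_two_mul_sum_eq_one (disjoint_iff_inter_eq_empty.2 hIJ) hI hJ hunion
    have hsign := signVector_eq_one_or_eq_neg_one (n := n)
    simpa using h (signVector I) (signVector J) (hsign I) (hsign J) ⟨x, hx,
      by rwa [sum_mul_eq_sum_sub_two_mul_sum_Sneg (hsign I), Sneg_signVector],
      by rwa [sum_mul_eq_sum_sub_two_mul_sum_Sneg (hsign J), Sneg_signVector]⟩
  · rintro h ε ε' hε hε' ⟨x, hx, hxε, hxε'⟩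
    rw [sum_mul_eq_sum_sub_two_mul_sum_Sneg hε] at hxε
    rw [sum_mul_eq_sum_sub_two_mul_sum_Sneg hε'] at hxε'
    obtain hSS' | hSS' := eq_or_ne (Sneg ε) (Sneg ε')
    · rw [hSS']
      exact commutatorElement_self _
    have hsum : ∑ i ∈ Sneg ε, x i = ∑ i ∈ Sneg ε', x i := by linarith
    have hI := sdiff_nonempty.2 fun hsub => hSS' (eq_of_subset_of_sum_eq hx hsub hsum)
    have hJ := sdiff_nonempty.2 fun hsub => hSS' (eq_of_subset_of_sum_eq hx hsub hsum.symm).symm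
    have hcard := card_sdiff_add_card_sdiff_lt
      (union_ne_univ_of_sum_sub_two_mul_sum_eq (fun i => (hx i).le) hxε hxε')
    rw [Fintype.card_fin] at hcard
    exact commutatorElement_conj_Mprod_eq_one_of_sdiff hcomm _ <|
      h _ _ (disjoint_iff_inter_eq_empty.1 disjoint_sdiff_sdiff) (nonempty_iff_ne_empty.1 hI)
        (nonempty_iff_ne_empty.1 hJ) (by omega)

/-- Let `Γ₀, Γ₁, …, Γₙ` be elements of a group `G` with `[Γᵢ, Γⱼ] = 1` for
`1 ≤ i, j ≤ n`.  Then the relations `[M_ε⁻¹Γ₀M_ε, M_{ε'}⁻¹Γ₀M_{ε'}] = 1` for all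
`ε, ε' ∈ {-1,1}ⁿ` with `H_ε ∩ H_{ε'} ∩ ℝⁿ_{>0} ≠ ∅` are equivalent to the relations
`[M(I)⁻¹Γ₀M(I), M(J)⁻¹Γ₀M(J)] = 1` for all disjoint nonempty `I, J ⊆ {1,…,n}` with
`#I + #J ≤ n - 1`, where `M_ε = M(S(ε))`. -/
theorem commutation_relations_equivalent (n : ℕ) (hn : 1 ≤ n)
    (G : Type*) [Group G] (Γ : Fin (n + 1) → G)
    (hcomm : ∀ i j : Fin n, Γ i.succ * Γ j.succ = Γ j.succ * Γ i.succ) :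
    (∀ ε ε' : Fin n → ℝ, (∀ i, ε i = 1 ∨ ε i = -1) → (∀ i, ε' i = 1 ∨ ε' i = -1) →
        (∃ x : Fin n → ℝ, (∀ l, 0 < x l) ∧ ∑ i, ε i * x i = 1 ∧ ∑ i, ε' i * x i = 1) →
        ⁅(Mprod Γ (Sneg ε))⁻¹ * Γ 0 * Mprod Γ (Sneg ε),
          (Mprod Γ (Sneg ε'))⁻¹ * Γ 0 * Mprod Γ (Sneg ε')⁆ = 1) ↔
      ∀ I J : Finset (Fin n), I ∩ J = ∅ → I ≠ ∅ → J ≠ ∅ → I.card + J.card ≤ n - 1 →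
        ⁅(Mprod Γ I)⁻¹ * Γ 0 * Mprod Γ I, (Mprod Γ J)⁻¹ * Γ 0 * Mprod Γ J⁆ = 1 :=
  commutation_relations_equivalent_general n G Γ hcomm
end

section
/- Let n ≥ 1 and let I, J ⊆ {1,…,n} satisfy I ∩ J = ∅, I ≠ ∅, J ≠ ∅ and #I + #J ≤ n − 1. Define ε, ε' ∈ {−1,1}ⁿ by εᵢ = −1 if i ∈ I and εᵢ = 1 otherwise, and ε'ᵢ = −1 if i ∈ J and ε'ᵢ = 1 otherwise. Then H_ε ∩ H_{ε'} ∩ ℝⁿ_{>0} ≠ ∅. -/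
open scoped BigOperators

/-- For disjoint nonempty `I, J ⊆ {1,…,n}` with `#I + #J ≤ n - 1`, the
hyperplanes `H_ε` and `H_{ε'}` (where `ε` is `-1` on `I` and `1` elsewhere, `ε'` is `-1`
on `J` and `1` elsewhere) meet the open positive orthant in a common point. -/
theorem hyperplanes_from_disjoint_sets_meet_positively (n : ℕ) (hn : 1 ≤ n)
    (I J : Finset (Fin n)) (hIJ : I ∩ J = ∅) (hI : I ≠ ∅) (hJ : J ≠ ∅)
    (hcard : I.card + J.card ≤ n - 1) :
    ∃ x : Fin n → ℝ, (∀ l, 0 < x l) ∧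
      ∑ i, (if i ∈ I then (-1 : ℝ) else 1) * x i = 1 ∧
      ∑ i, (if i ∈ J then (-1 : ℝ) else 1) * x i = 1 := by
  classical
  set K : Finset (Fin n) := (I ∪ J)ᶜ with hK
  have hdisj : Disjoint I J := Finset.disjoint_iff_inter_eq_empty.mpr hIJ
  have hIc : 0 < I.card := Finset.card_pos.mpr (Finset.nonempty_iff_ne_empty.mpr hI)
  have hJc : 0 < J.card := Finset.card_pos.mpr (Finset.nonempty_iff_ne_empty.mpr hJ)
  have hIJcard : (I ∪ J).card = I.card + J.card := Finset.card_union_of_disjoint hdisj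
  have hKcard : K.card = n - (I ∪ J).card := by
    rw [hK, Finset.card_compl, Fintype.card_fin]
  have hIJle : (I ∪ J).card ≤ n := by
    simpa using Finset.card_le_card (Finset.subset_univ (I ∪ J))
  have hKc : 0 < K.card := by omega
  have hIR : (0:ℝ) < (I.card : ℝ) := by exact_mod_cast hIc
  have hJR : (0:ℝ) < (J.card : ℝ) := by exact_mod_cast hJc
  have hKR : (0:ℝ) < (K.card : ℝ) := by exact_mod_cast hKc
  have hInotJ : ∀ i ∈ I, i ∉ J := fun i hi hj => (Finset.disjoint_left.mp hdisj) hi hj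
  have hJnotI : ∀ i ∈ J, i ∉ I := fun i hi hj => (Finset.disjoint_left.mp hdisj) hj hi
  have hKnot : ∀ i ∈ K, i ∉ I ∧ i ∉ J := by
    intro i hi
    have := Finset.mem_compl.mp hi
    simp only [Finset.mem_union, not_or] at this
    exact this
  have hsplit : (Finset.univ : Finset (Fin n)) = (I ∪ J) ∪ K := by
    rw [hK, Finset.union_compl]
  have hdisjK : Disjoint (I ∪ J) K := by rw [hK]; exact disjoint_compl_right
  set x : Fin n → ℝ := fun i => if i ∈ I then (I.card : ℝ)⁻¹ else if i ∈ J then (J.card : ℝ)⁻¹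
      else (K.card : ℝ)⁻¹ with hx
  have hsum : ∀ c₁ c₂ c₃ : ℝ,
      ∑ i ∈ I, c₁ * x i = c₁ → ∑ i ∈ J, c₂ * x i = c₂ → ∑ i ∈ K, c₃ * x i = c₃ →
      ∀ f : Fin n → ℝ, (∀ i ∈ I, f i = c₁ * x i) → (∀ i ∈ J, f i = c₂ * x i) →
      (∀ i ∈ K, f i = c₃ * x i) → ∑ i, f i = c₁ + c₂ + c₃ := by
    intro c₁ c₂ c₃ h1 h2 h3 f hf1 hf2 hf3
    rw [hsplit, Finset.sum_union hdisjK, Finset.sum_union hdisj,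
      Finset.sum_congr rfl hf1, Finset.sum_congr rfl hf2, Finset.sum_congr rfl hf3,
      h1, h2, h3]
  have hsI : ∀ c : ℝ, ∑ i ∈ I, c * x i = c := by
    intro c
    have : ∀ i ∈ I, c * x i = c * (I.card : ℝ)⁻¹ := by
      intro i hi; rw [hx]; simp [hi]
    rw [Finset.sum_congr rfl this, Finset.sum_const, nsmul_eq_mul, ← mul_assoc,
      mul_comm (I.card : ℝ) c, mul_assoc, mul_inv_cancel₀ hIR.ne', mul_one]
  have hsJ : ∀ c : ℝ, ∑ i ∈ J, c * x i = c := by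
    intro c
    have : ∀ i ∈ J, c * x i = c * (J.card : ℝ)⁻¹ := by
      intro i hi; rw [hx]; simp [hi, hJnotI i hi]
    rw [Finset.sum_congr rfl this, Finset.sum_const, nsmul_eq_mul, ← mul_assoc,
      mul_comm (J.card : ℝ) c, mul_assoc, mul_inv_cancel₀ hJR.ne', mul_one]
  have hsK : ∀ c : ℝ, ∑ i ∈ K, c * x i = c := by
    intro c
    have : ∀ i ∈ K, c * x i = c * (K.card : ℝ)⁻¹ := by
      intro i hi; rw [hx]; simp [(hKnot i hi).1, (hKnot i hi).2]
    rw [Finset.sum_congr rfl this, Finset.sum_const, nsmul_eq_mul, ← mul_assoc,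
      mul_comm (K.card : ℝ) c, mul_assoc, mul_inv_cancel₀ hKR.ne', mul_one]
  refine ⟨x, ?_, ?_, ?_⟩
  · intro l
    show 0 < if l ∈ I then (I.card:ℝ)⁻¹ else if l ∈ J then (J.card:ℝ)⁻¹ else (K.card:ℝ)⁻¹
    split_ifs
    · exact inv_pos.mpr hIR
    · exact inv_pos.mpr hJR
    · exact inv_pos.mpr hKR
  · have := hsum (-1) 1 1 (hsI (-1)) (hsJ 1) (hsK 1)
      (fun i => (if i ∈ I then (-1 : ℝ) else 1) * x i)
      (fun i hi => by simp [hi]) (fun i hi => by simp [hJnotI i hi])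
      (fun i hi => by simp [(hKnot i hi).1])
    rw [this]; norm_num
  · have := hsum 1 (-1) 1 (hsI 1) (hsJ (-1)) (hsK 1)
      (fun i => (if i ∈ J then (-1 : ℝ) else 1) * x i)
      (fun i hi => by simp [hInotJ i hi]) (fun i hi => by simp [hi])
      (fun i hi => by simp [(hKnot i hi).2])
    rw [this]; norm_num
end
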